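/- Let a ≥ 1 and P ≥ 1. Then there exists a constant c > 0, depending only on a and P, such that for every n > 0 and every y ≥ 0, ∫_0^y min(z, n)^{aP−1} dz ≤ c · ( ∫_0^y min(z, n)^{a−1} dz )^{P}. -/
import Mathlib


/-- Truncation inequality: for `a ≥ 1`, `P ≥ 1` there is `c > 0` with
`∫_0^y min(z,n)^{aP-1} dz ≤ c (∫_0^y min(z,n)^{a-1} dz)^P`. -/
theorem stmt_10 (a P : ℝ) (ha : 1 ≤ a) (hP : 1 ≤ P) :
    ∃ c > 0, ∀ n > (0:ℝ), ∀ y ≥ (0:ℝ),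
      (∫ z in (0:ℝ)..y, min z n ^ (a * P - 1)) ≤
        c * (∫ z in (0:ℝ)..y, min z n ^ (a - 1)) ^ P := by
  have ha0 : (0:ℝ) < a := lt_of_lt_of_le one_pos ha
  refine ⟨a ^ (P - 1), Real.rpow_pos_of_pos ha0 _, ?_⟩
  intro n hn y hy
  rcases eq_or_lt_of_le hy with h0 | hy0
  · rw [← h0]
    simp [Real.zero_rpow (by positivity : P ≠ 0)]
  -- continuity of truncated power functions
  have hcont : ∀ e : ℝ, 0 ≤ e → Continuous (fun z : ℝ => min z n ^ e) := by
    intro e he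
    exact (continuous_id.min continuous_const).rpow_const (fun x => Or.inr he)
  have hIIa : IntervalIntegrable (fun z : ℝ => min z n ^ (a - 1)) MeasureTheory.volume 0 y :=
    (hcont (a - 1) (by linarith)).intervalIntegrable 0 y
  set M : ℝ := min y n with hMdef
  have hM : 0 < M := lt_min hy0 hn
  set I : ℝ := ∫ z in (0:ℝ)..y, min z n ^ (a - 1) with hIdef
  -- lower bound on I
  have hnonneg : ∀ z ∈ Set.Ioc (0:ℝ) y, 0 ≤ min z n ^ (a - 1) := by
    intro z hz
    exact Real.rpow_nonneg (le_min hz.1.le hn.le) _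
  have hIlow : M ^ a / a ≤ I := by
    have h1 : (∫ z in (0:ℝ)..M, min z n ^ (a - 1)) ≤ I := by
      apply intervalIntegral.integral_mono_interval le_rfl hM.le (min_le_left y n)
      · filter_upwards [MeasureTheory.ae_restrict_mem measurableSet_Ioc] with z hz
        exact hnonneg z hz
      · exact hIIa
    have h2 : (∫ z in (0:ℝ)..M, min z n ^ (a - 1)) = ∫ z in (0:ℝ)..M, z ^ (a - 1) := by
      apply intervalIntegral.integral_congr
      intro z hz
      rw [Set.uIcc_of_le hM.le] at hz
      have hzz : min z n = z := min_eq_left (le_trans hz.2 (min_le_right y n))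
      simp [hzz]
    have h3 : (∫ z in (0:ℝ)..M, z ^ (a - 1)) = M ^ a / a := by
      rw [integral_rpow (Or.inl (by linarith))]
      rw [Real.zero_rpow (by linarith : a - 1 + 1 ≠ 0)]
      ring_nf
    calc M ^ a / a = ∫ z in (0:ℝ)..M, min z n ^ (a - 1) := by rw [h2, h3]
      _ ≤ I := h1
  have hI : 0 < I := lt_of_lt_of_le (by positivity) hIlow
  -- pointwise bound
  have hpt : ∀ z ∈ Set.Icc (0:ℝ) y,
      min z n ^ (a * P - 1) ≤ min z n ^ (a - 1) * M ^ (a * (P - 1)) := by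
    intro z hz
    set x := min z n with hx
    have hx0 : 0 ≤ x := le_min hz.1 hn.le
    have hxM : x ≤ M := min_le_min hz.2 le_rfl
    rcases eq_or_lt_of_le hx0 with h | h
    · rcases eq_or_lt_of_le (by nlinarith : (0:ℝ) ≤ a * P - 1) with h1 | h1
      · have haP : a = 1 ∧ P = 1 := by constructor <;> nlinarith
        rw [← h, haP.1, haP.2]
        norm_num
      · rw [← h, Real.zero_rpow (ne_of_gt h1)]
        positivity
    · calc x ^ (a * P - 1) = x ^ (a - 1) * x ^ (a * (P - 1)) := by
            rw [← Real.rpow_add h]; ring_nf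
        _ ≤ x ^ (a - 1) * M ^ (a * (P - 1)) := by
            apply mul_le_mul_of_nonneg_left _ (Real.rpow_nonneg h.le _)
            exact Real.rpow_le_rpow h.le hxM (by nlinarith)
  -- integral bound
  have hmain : (∫ z in (0:ℝ)..y, min z n ^ (a * P - 1)) ≤ I * M ^ (a * (P - 1)) := by
    have := intervalIntegral.integral_mono_on hy
      ((hcont (a * P - 1) (by nlinarith)).intervalIntegrable 0 y)
      ((hIIa.mul_const (M ^ (a * (P - 1))))) hpt
    rw [intervalIntegral.integral_mul_const] at this
    exact this
  -- bound M ^ (a*(P-1)) by a^(P-1) * I^(P-1)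
  have hMP : M ^ (a * (P - 1)) ≤ a ^ (P - 1) * I ^ (P - 1) := by
    have h1 : M ^ (a * (P - 1)) = (M ^ a) ^ (P - 1) := Real.rpow_mul hM.le a (P - 1)
    rw [h1, ← Real.mul_rpow ha0.le hI.le]
    apply Real.rpow_le_rpow (by positivity) _ (by linarith)
    calc M ^ a = a * (M ^ a / a) := by field_simp
      _ ≤ a * I := by
        exact mul_le_mul_of_nonneg_left hIlow ha0.le
  calc (∫ z in (0:ℝ)..y, min z n ^ (a * P - 1)) ≤ I * M ^ (a * (P - 1)) := hmain
    _ ≤ I * (a ^ (P - 1) * I ^ (P - 1)) := by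
        exact mul_le_mul_of_nonneg_left hMP hI.le
    _ = a ^ (P - 1) * (I ^ (P - 1) * I ^ (1:ℝ)) := by rw [Real.rpow_one]; ring
    _ = a ^ (P - 1) * I ^ P := by rw [← Real.rpow_add hI]; ring_nf
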